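/- arXiv:math/0611244 — 2 statements merged into one kernel-verified Lean document; each statement's English description precedes it below -/
import Mathlib

section
/- Let P = ℂ[[x₁,…,xₙ]] with maximal ideal m and let 0 ≠ f ∈ m. For every k ∈ ℕ there exists m₀ ∈ ℕ such that: for every ℂ-linear derivation δ of P with δ(f) ∈ (f) + m^{m₀+1}, there exists δ' ∈ Der_f with δ(xⱼ) − δ'(xⱼ) ∈ m^{k+1} for all j (i.e. δ and δ' agree modulo m^{k+1}·Der(P)). -/
/-!
The values `δ f` of all derivations, together with `(f)`, form an ideal `N` of the Noetherian
ring `P`. By Artin–Rees, `m ^ (c + k + 1) ∩ N ⊆ m ^ (k + 1) N` for some `c`; so if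
`δ f ∈ (f) + m ^ (c + k + 1)`, the error term is `ε f + g` with `ε ∈ m ^ (k + 1) Der(P)` and
`g ∈ (f)`, and `δ - ε` is the required logarithmic derivation.
-/

noncomputable section

def mIdeal (n : ℕ) : Ideal (MvPowerSeries (Fin n) ℂ) :=
  Ideal.span (Set.range (MvPowerSeries.X : Fin n → MvPowerSeries (Fin n) ℂ))

def Derivation.evalₗ {R A M : Type*} [CommSemiring R] [CommSemiring A] [Algebra R A]
    [AddCommMonoid M] [Module A M] [Module R M] [IsScalarTower R A M] (a : A) :
    Derivation R A M →ₗ[A] M where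
  toFun D := D a
  map_add' _ _ := rfl
  map_smul' _ _ := rfl

theorem LinearMap.exists_smul_top_correction_of_apply_mem_sup_pow {R M : Type*} [CommRing R]
    [IsNoetherianRing R] [AddCommGroup M] [Module R M] (φ : M →ₗ[R] R) (I J : Ideal R) (k : ℕ) :
    ∃ m₀, ∀ x, φ x ∈ J ⊔ I ^ m₀ → ∃ ε ∈ I ^ k • (⊤ : Submodule R M), φ (x - ε) ∈ J := by
  obtain ⟨c, hc⟩ := I.exists_pow_inf_eq_pow_smul (LinearMap.range φ ⊔ J)
  refine ⟨c + k, fun x hx => ?_⟩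
  obtain ⟨y, hy, z, hz, hyz⟩ := Submodule.mem_sup.1 hx
  have hz_mem : z ∈ I ^ (c + k) • ⊤ ⊓ (LinearMap.range φ ⊔ J) := by
    refine ⟨by rwa [smul_eq_mul, Ideal.mul_top], ?_⟩
    rw [show z = φ x - y by rw [← hyz, add_sub_cancel_left]]
    exact sub_mem (Submodule.mem_sup_left ⟨x, rfl⟩) (Submodule.mem_sup_right hy)
  rw [hc _ (Nat.le_add_right c k), Nat.add_sub_cancel_left] at hz_mem
  have hz_smul : z ∈ I ^ k • (LinearMap.range φ ⊔ J) :=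
    Submodule.smul_mono le_rfl inf_le_right hz_mem
  rw [Submodule.smul_sup, LinearMap.range_eq_map, ← Submodule.map_smul''] at hz_smul
  obtain ⟨_, ⟨ε, hε, rfl⟩, w, hw, hzw⟩ := Submodule.mem_sup.1 hz_smul
  refine ⟨ε, hε, ?_⟩
  rw [map_sub, ← hyz, ← hzw, add_left_comm, add_sub_cancel_left]
  exact add_mem hy (Submodule.smul_le_right hw)

theorem derLog_approximation_general {n : ℕ}
    (f : MvPowerSeries (Fin n) ℂ) (k : ℕ) :
    ∃ m₀ : ℕ, ∀ δ : Derivation ℂ (MvPowerSeries (Fin n) ℂ) (MvPowerSeries (Fin n) ℂ),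
      δ f ∈ Ideal.span {f} ⊔ mIdeal n ^ (m₀ + 1) →
      ∃ δ' : Derivation ℂ (MvPowerSeries (Fin n) ℂ) (MvPowerSeries (Fin n) ℂ),
        δ' f ∈ Ideal.span {f} ∧
        ∀ j, δ (MvPowerSeries.X j) - δ' (MvPowerSeries.X j) ∈ mIdeal n ^ (k + 1) := by
  obtain ⟨m₀, hm₀⟩ :=
    (Derivation.evalₗ (R := ℂ) f).exists_smul_top_correction_of_apply_mem_sup_pow
      (mIdeal n) (Ideal.span {f}) (k + 1)
  refine ⟨m₀, fun δ hδ => ?_⟩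
  have hle : Ideal.span {f} ⊔ mIdeal n ^ (m₀ + 1) ≤ Ideal.span {f} ⊔ mIdeal n ^ m₀ :=
    sup_le_sup_left (Ideal.pow_le_pow_right m₀.le_succ) _
  obtain ⟨ε, hε, hδε⟩ := hm₀ δ (hle hδ)
  refine ⟨δ - ε, hδε, fun j => ?_⟩
  rw [Derivation.sub_apply, sub_sub_cancel]
  have hεj := Submodule.smul_top_le_comap_smul_top _ (Derivation.evalₗ (MvPowerSeries.X j)) hε
  rwa [Submodule.mem_comap, smul_eq_mul, Ideal.mul_top] at hεj

/-- Let `P = ℂ[[x₁,…,xₙ]]` with maximal ideal `m` and `0 ≠ f ∈ m`. For every `k ∈ ℕ`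
there exists `m₀ ∈ ℕ` such that: for every ℂ-linear derivation `δ` of `P` with
`δ(f) ∈ (f) + m^{m₀+1}` there exists `δ' ∈ Der_f` with `δ(xⱼ) − δ'(xⱼ) ∈ m^{k+1}`
for all `j`. -/
theorem derLog_approximation {n : ℕ} (hn : 0 < n)
    (f : MvPowerSeries (Fin n) ℂ) (hf0 : f ≠ 0) (hfm : f ∈ mIdeal n) (k : ℕ) :
    ∃ m₀ : ℕ, ∀ δ : Derivation ℂ (MvPowerSeries (Fin n) ℂ) (MvPowerSeries (Fin n) ℂ),
      δ f ∈ Ideal.span {f} ⊔ mIdeal n ^ (m₀ + 1) →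
      ∃ δ' : Derivation ℂ (MvPowerSeries (Fin n) ℂ) (MvPowerSeries (Fin n) ℂ),
        δ' f ∈ Ideal.span {f} ∧
        ∀ j, δ (MvPowerSeries.X j) - δ' (MvPowerSeries.X j) ∈ mIdeal n ^ (k + 1) :=
  derLog_approximation_general f k
end
end

section
/- Let P = ℂ[[x₁,…,xₙ]] with maximal ideal m and let φ be a ℂ-algebra automorphism of P with φ(m) = m. Suppose φ is semisimple in the sense that there exist u₁,…,uₙ ∈ m generating m (a formal coordinate system) and scalars c₁,…,cₙ ∈ ℂ with φ(uᵢ) = cᵢ·uᵢ for all i. If the degree-0 part of φ is the identity, i.e. φ(xⱼ) − xⱼ ∈ m² for all j, then φ is the identity automorphism of P. -/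
/-!
Write `δ = φ - id`. The twisted Leibniz rule `δ(xy) = φ(x) δ(y) + δ(x) y` propagates
`δ(xⱼ) ∈ m²` to `δ(mᵏ) ⊆ mᵏ⁺¹` for every `k`. An eigenvector `u` with eigenvalue `c ≠ 1` is
then `(c - 1)⁻¹ δ(u)`, so it lies in every `mᵏ` and vanishes because `P` is `m`-adically
separated; hence every `uᵢ` is fixed. As the `uᵢ` generate `m` and `P = ℂ + m`, the Leibniz rule
now gives `δ(P) ⊆ mᵏ` for every `k`, so `δ = 0`.
-/

noncomputable section
set_option synthInstance.maxHeartbeats 1000000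
set_option maxHeartbeats 1000000

namespace MvPowerSeries

variable {σ R : Type*}

section CommSemiring

variable [CommSemiring R]

def minVarPart [LinearOrder σ] (f : MvPowerSeries σ R) (j : σ) : MvPowerSeries σ R :=
  fun d => if d.support.min = j then coeff d f else 0

theorem coeff_minVarPart [LinearOrder σ] (f : MvPowerSeries σ R) (j : σ) (d : σ →₀ ℕ) :
    coeff d (minVarPart f j) = if d.support.min = j then coeff d f else 0 :=
  rfl

theorem X_dvd_minVarPart [LinearOrder σ] (f : MvPowerSeries σ R) (j : σ) :
    X j ∣ minVarPart f j :=
  X_dvd_iff.mpr fun d hd => by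
    rw [coeff_minVarPart, if_neg]
    exact fun h => Finsupp.mem_support_iff.mp (Finset.mem_of_min h) hd

theorem sum_minVarPart [Fintype σ] [LinearOrder σ] {f : MvPowerSeries σ R}
    (hf : constantCoeff f = 0) : ∑ j, minVarPart f j = f := by
  ext d
  simp only [map_sum, coeff_minVarPart]
  cases h : d.support.min with
  | top =>
    obtain rfl : d = 0 := Finsupp.support_eq_empty.mp (Finset.min_eq_top.mp h)
    simp [hf]
  | coe j => simp [Finset.sum_ite_eq]

theorem mem_span_range_X_of_constantCoeff_eq_zero [Finite σ] {f : MvPowerSeries σ R}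
    (hf : constantCoeff f = 0) : f ∈ Ideal.span (Set.range X) := by
  have := Fintype.ofFinite σ
  let := LinearOrder.lift' _ (Fintype.equivFin σ).injective
  rw [← sum_minVarPart hf]
  refine Ideal.sum_mem _ fun j _ => ?_
  obtain ⟨g, hg⟩ := X_dvd_minVarPart f j
  exact hg ▸ Ideal.mul_mem_right _ _ (Ideal.subset_span ⟨j, rfl⟩)

end CommSemiring

theorem sub_C_constantCoeff_mem_span_range_X [CommRing R] [Finite σ] (f : MvPowerSeries σ R) :
    f - C (constantCoeff f) ∈ Ideal.span (Set.range (X : σ → MvPowerSeries σ R)) :=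
  mem_span_range_X_of_constantCoeff_eq_zero (by simp)

end MvPowerSeries

section

variable {R F : Type*} [CommRing R] [FunLike F R R] [RingHomClass F R R] (φ : F)

theorem map_mul_sub_mul (x y : R) : φ (x * y) - x * y = φ x * (φ y - y) + (φ x - x) * y := by
  rw [map_mul]
  ring

variable {φ}

theorem map_sub_self_mem_of_mem_span_range {ι : Type*} [Fintype ι] {v : ι → R} {J : Ideal R}
    (hv : ∀ i, φ (v i) - v i ∈ J) (hmul : ∀ r i, (φ r - r) * v i ∈ J) {y : R}
    (hy : y ∈ Ideal.span (Set.range v)) : φ y - y ∈ J := by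
  obtain ⟨a, rfl⟩ := (Submodule.mem_span_range_iff_exists_fun R).mp hy
  simp only [map_sum, smul_eq_mul, ← Finset.sum_sub_distrib, map_mul_sub_mul]
  exact J.sum_mem fun i _ => J.add_mem (J.mul_mem_left _ (hv i)) (hmul _ i)

theorem map_sub_self_mem_pow_add_succ {I : Ideal R} {a b : ℕ} {x y : R} (hx : x ∈ I ^ a)
    (hδx : φ x - x ∈ I ^ (a + 1)) (hδy : φ y - y ∈ I ^ (b + 1)) (hy : y ∈ I ^ b) :
    φ (x * y) - x * y ∈ I ^ (a + b + 1) := by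
  have hφx : φ x ∈ I ^ a := by
    simpa using add_mem hx (Ideal.pow_le_pow_right a.le_succ hδx)
  rw [map_mul_sub_mul]
  refine add_mem ?_ ?_
  · rw [add_assoc, pow_add]
    exact Ideal.mul_mem_mul hφx hδy
  · rw [add_right_comm, pow_add]
    exact Ideal.mul_mem_mul hδx hy

end

theorem IsHausdorff.eq_zero_of_forall_mem_pow {R : Type*} [CommRing R] {I : Ideal R}
    [IsHausdorff I R] {x : R} (h : ∀ k, x ∈ I ^ k) : x = 0 :=
  IsHausdorff.haus ‹_› x fun k => by simpa [SModEq.zero] using h k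

section

variable {K R F : Type*} [CommSemiring K] [CommRing R] [Algebra K R] [FunLike F R R]
  [AlgHomClass F K R R] {φ : F} {I : Ideal R}

theorem map_sub_self_mem_of_exists_algebraMap (hI : ∀ r, ∃ c : K, r - algebraMap K R c ∈ I)
    {J : Ideal R} (hJ : ∀ y ∈ I, φ y - y ∈ J) (r : R) : φ r - r ∈ J := by
  obtain ⟨c, hc⟩ := hI r
  have := hJ _ hc
  rwa [map_sub, AlgHomClass.commutes, sub_sub_sub_cancel_right] at this

theorem map_sub_self_mem_pow_succ (hI : ∀ r, ∃ c : K, r - algebraMap K R c ∈ I)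
    {ι : Type*} [Fintype ι] {v : ι → R} (hv : Ideal.span (Set.range v) = I)
    (hv2 : ∀ i, φ (v i) - v i ∈ I ^ 2) : ∀ k, ∀ x ∈ I ^ k, φ x - x ∈ I ^ (k + 1) := by
  have hvI : ∀ i, v i ∈ I := fun i => hv ▸ Ideal.subset_span ⟨i, rfl⟩
  have hδ : ∀ r, φ r - r ∈ I := map_sub_self_mem_of_exists_algebraMap hI fun y hy =>
    map_sub_self_mem_of_mem_span_range (fun i => Ideal.pow_le_self two_ne_zero (hv2 i))
      (fun r i => I.mul_mem_left _ (hvI i)) (hv ▸ hy)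
  have hI2 : ∀ y ∈ I, φ y - y ∈ I ^ 2 := fun y hy =>
    map_sub_self_mem_of_mem_span_range hv2
      (fun r i => sq I ▸ Ideal.mul_mem_mul (hδ r) (hvI i)) (hv ▸ hy)
  intro k
  induction k with
  | zero => exact fun x _ => by simpa using hδ x
  | succ k ih =>
    intro x hx
    rw [pow_succ] at hx
    refine Submodule.mul_induction_on hx (fun x hx y hy => ?_) (fun x y hx hy => ?_)
    · exact map_sub_self_mem_pow_add_succ hx (ih x hx) (hI2 y hy) (by simpa using hy)
    · simpa [add_sub_add_comm] using add_mem hx hy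

theorem map_eq_self_of_forall_map_eq_self [IsHausdorff I R]
    (hI : ∀ r, ∃ c : K, r - algebraMap K R c ∈ I) {ι : Type*} [Fintype ι] {u : ι → R}
    (hu : Ideal.span (Set.range u) = I) (hfix : ∀ i, φ (u i) = u i) (r : R) : φ r = r := by
  have h : ∀ k, ∀ r, φ r - r ∈ I ^ k := by
    intro k
    induction k with
    | zero => simp
    | succ k ih =>
      refine map_sub_self_mem_of_exists_algebraMap hI fun y hy => ?_
      refine map_sub_self_mem_of_mem_span_range (by simp [hfix]) (fun r i => ?_) (hu ▸ hy)
      exact pow_succ I k ▸ Ideal.mul_mem_mul (ih r) (hu ▸ Ideal.subset_span ⟨i, rfl⟩)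
  exact sub_eq_zero.mp (IsHausdorff.eq_zero_of_forall_mem_pow fun k => h k r)

end

theorem map_eq_self_of_map_eq_smul {K R F : Type*} [Field K] [CommRing R] [Algebra K R]
    [FunLike F R R] [RingHomClass F R R] {φ : F} {I : Ideal R} [IsHausdorff I R]
    (hφ : ∀ k, ∀ x ∈ I ^ k, φ x - x ∈ I ^ (k + 1)) {u : R} {c : K} (hc : φ u = c • u) :
    φ u = u := by
  rcases eq_or_ne c 1 with rfl | hc1
  · rw [hc, one_smul]
  have hu : u = (c - 1)⁻¹ • (φ u - u) := by
    rw [hc, eq_inv_smul_iff₀ (sub_ne_zero.mpr hc1), sub_smul, one_smul]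
  have hpow : ∀ k, u ∈ I ^ k := by
    intro k
    induction k with
    | zero => simp
    | succ k ih => exact hu ▸ Submodule.smul_of_tower_mem _ _ (hφ k u ih)
  rw [IsHausdorff.eq_zero_of_forall_mem_pow hpow, map_zero]

instance (n : ℕ) : IsHausdorff (mIdeal n) (MvPowerSeries (Fin n) ℂ) := by
  unfold mIdeal
  infer_instance

theorem semisimple_automorphism_eq_id_general {n : ℕ}
    (φ : MvPowerSeries (Fin n) ℂ ≃ₐ[ℂ] MvPowerSeries (Fin n) ℂ)
    (u : Fin n → MvPowerSeries (Fin n) ℂ)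
    (hugen : Ideal.span (Set.range u) = mIdeal n)
    (c : Fin n → ℂ) (hdiag : ∀ i, φ (u i) = c i • u i)
    (h0 : ∀ j, φ (MvPowerSeries.X j) - MvPowerSeries.X j ∈ mIdeal n ^ 2) :
    φ = AlgEquiv.refl := by
  have hC : ∀ r, ∃ c : ℂ, r - algebraMap ℂ _ c ∈ mIdeal n := fun r =>
    ⟨r.constantCoeff, by
      rw [MvPowerSeries.algebraMap_apply, Algebra.algebraMap_self, RingHom.id_apply]
      exact MvPowerSeries.sub_C_constantCoeff_mem_span_range_X r⟩
  have hφ := map_sub_self_mem_pow_succ hC rfl h0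
  have hfix : ∀ i, φ (u i) = u i := fun i => map_eq_self_of_map_eq_smul hφ (hdiag i)
  exact AlgEquiv.ext (map_eq_self_of_forall_map_eq_self hC hugen hfix)

/-- Cartan's uniqueness theorem for semisimple automorphisms: let `φ` be a ℂ-algebra
automorphism of `P = ℂ[[x₁,…,xₙ]]` with `φ(m) = m` which is semisimple, i.e. there is a
formal coordinate system `u₁,…,uₙ ∈ m` generating `m` with `φ(uᵢ) = cᵢ·uᵢ`. If the
degree-0 part of `φ` is the identity (`φ(xⱼ) − xⱼ ∈ m²` for all `j`), then `φ = id`. -/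
theorem semisimple_automorphism_eq_id {n : ℕ} (hn : 0 < n)
    (φ : MvPowerSeries (Fin n) ℂ ≃ₐ[ℂ] MvPowerSeries (Fin n) ℂ)
    (hm : ∀ g, g ∈ mIdeal n ↔ φ g ∈ mIdeal n)
    (u : Fin n → MvPowerSeries (Fin n) ℂ) (hu : ∀ i, u i ∈ mIdeal n)
    (hugen : Ideal.span (Set.range u) = mIdeal n)
    (c : Fin n → ℂ) (hdiag : ∀ i, φ (u i) = c i • u i)
    (h0 : ∀ j, φ (MvPowerSeries.X j) - MvPowerSeries.X j ∈ mIdeal n ^ 2) :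
    φ = AlgEquiv.refl :=
  semisimple_automorphism_eq_id_general φ u hugen c hdiag h0
end
end
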